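/- arXiv:2409.09818 — 9 statements merged into one kernel-verified Lean document; each statement's English description precedes it below -/
import Mathlib

section
/- Let Ω be a set of states and P : Ω → 2^Ω a possibility correspondence. The unawareness set of the full state space equals the set of states with empty possibility set: U'(Ω) = {ω ∈ Ω : P(ω) = ∅}. -/
/-- Revised knowledge operator: `K'(E) = {ω : P ω ≠ ∅ ∧ P ω ⊆ E}`. -/
def Kp {Ω : Type*} (P : Ω → Set Ω) (E : Set Ω) : Set Ω :=
  {ω | P ω ≠ ∅ ∧ P ω ⊆ E}

/-- Complement of the revised knowledge operator: `¬K'(E) = Ω \ K'(E)`. -/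
def nKp {Ω : Type*} (P : Ω → Set Ω) (E : Set Ω) : Set Ω :=
  (Kp P E)ᶜ

/-- Revised unawareness operator: `U'(E) = ⋂_{i ≥ 1} (¬K')^i (E)`. -/
def Up {Ω : Type*} (P : Ω → Set Ω) (E : Set Ω) : Set Ω :=
  ⋂ i : ℕ, (nKp P)^[i + 1] E

lemma mem_nKp_of_empty {Ω : Type*} (P : Ω → Set Ω) (E : Set Ω) {ω : Ω}
    (h : P ω = ∅) : ω ∈ nKp P E := by
  simp [nKp, Kp, h]

/-- Theorem 1 (first equality): U'(Ω) = {ω : P ω = ∅}. -/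
theorem Up_univ_eq_empty_possibility {Ω : Type*} [Nonempty Ω] (P : Ω → Set Ω) :
    Up P Set.univ = {ω : Ω | P ω = ∅} := by
  ext ω
  constructor
  · intro h
    have h0 := Set.mem_iInter.mp h 0
    by_contra hne
    exact h0 ⟨hne, Set.subset_univ _⟩
  · intro h
    refine Set.mem_iInter.mpr fun i => ?_
    rw [Function.iterate_succ_apply']
    exact mem_nKp_of_empty P _ h
end

section
/- Let Ω be a set of states and P : Ω → 2^Ω a possibility correspondence. The unawareness set of the full state space equals the intersection of the unawareness sets of all events: U'(Ω) = ⋂_{E ⊆ Ω} U'(E). -/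
/-- Theorem 1 (second equality): U'(Ω) = ⋂_{E ⊆ Ω} U'(E). -/
theorem Up_univ_eq_iInter_Up {Ω : Type*} [Nonempty Ω] (P : Ω → Set Ω) :
    Up P Set.univ = ⋂ E : Set Ω, Up P E := by
  apply Set.Subset.antisymm
  · intro ω hω
    -- From the first iterate at E = univ, P ω = ∅.
    have h1 : ω ∈ nKp P Set.univ := by
      have := Set.mem_iInter.mp hω 0
      simpa using this
    have hP : P ω = ∅ := by
      by_contra h
      exact h1 ⟨h, Set.subset_univ _⟩
    -- Then ω ∈ nKp P F for every F.
    have hall : ∀ F : Set Ω, ω ∈ nKp P F := fun F h => h.1 hP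
    refine Set.mem_iInter.mpr fun E => Set.mem_iInter.mpr fun i => ?_
    rw [Function.iterate_succ_apply']
    exact hall _
  · intro ω hω
    exact Set.mem_iInter.mp hω Set.univ
end

section
/- Let Ω be a set of states and P : Ω → 2^Ω a possibility correspondence. For every event E ⊆ Ω, U'(Ω) ⊆ U'(E); that is, any state at which the agent is unaware of the full state space Ω is a state at which she is unaware of every event. -/
/-- U'(Ω) ⊆ U'(E) for every event E. -/
theorem Up_univ_subset_Up {Ω : Type*} [Nonempty Ω] (P : Ω → Set Ω) (E : Set Ω) :
    Up P Set.univ ⊆ Up P E := by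
  intro ω hω
  have h1 : ω ∈ nKp P Set.univ := by
    have := Set.mem_iInter.mp hω 0
    simpa using this
  have hP : P ω = ∅ := by
    by_contra h
    exact h1 ⟨h, Set.subset_univ _⟩
  apply Set.mem_iInter.mpr
  intro i
  show ω ∈ (nKp P)^[i + 1] E
  rw [Function.iterate_succ_apply']
  intro hK
  exact hK.1 hP
end

section
/- Let Ω be a set of states and P : Ω → 2^Ω a possibility correspondence. R necessitation holds: K'(Ω) = Ω \ U'(Ω), and equivalently the complement of K'(Ω) equals the unawareness set U'(Ω). -/
/-- R necessitation: K'(Ω) = Ω \ U'(Ω), equivalently ¬K'(Ω) = U'(Ω). -/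
theorem r_necessitation {Ω : Type*} [Nonempty Ω] (P : Ω → Set Ω) :
    Kp P Set.univ = Set.univ \ Up P Set.univ ∧ (Kp P Set.univ)ᶜ = Up P Set.univ := by
  have hU : Up P Set.univ = (Kp P Set.univ)ᶜ := by
    apply Set.Subset.antisymm
    · intro ω hω
      have h0 := Set.mem_iInter.mp hω 0
      simpa [nKp] using h0
    · intro ω hω
      have hP : P ω = ∅ := by
        by_contra h
        exact hω ⟨h, Set.subset_univ _⟩
      apply Set.mem_iInter.mpr
      intro i
      induction i with
      | zero => simp [nKp, Kp, hP]
      | succ n ih =>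
        rw [Function.iterate_succ_apply']
        intro hk
        exact hk.1 hP
  constructor
  · rw [hU]; ext ω; simp [Set.mem_diff]
  · rw [hU]
end

section
/- Let Ω be a set of states and P : Ω → 2^Ω a possibility correspondence. Plausibility holds: for every event E ⊆ Ω, U'(Ω) ⊆ U'(E) ⊆ ¬K'(E) ∩ ¬K'(¬K'(E)). -/
/-- Plausibility: U'(Ω) ⊆ U'(E) ⊆ ¬K'(E) ∩ ¬K'(¬K'(E)). -/
theorem Up_plausibility {Ω : Type*} [Nonempty Ω] (P : Ω → Set Ω) (E : Set Ω) :
    Up P Set.univ ⊆ Up P E ∧ Up P E ⊆ nKp P E ∩ nKp P (nKp P E) := by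
  constructor
  · intro ω hω
    have h0 : ω ∈ nKp P Set.univ := by
      have := Set.mem_iInter.1 hω 0
      simpa using this
    have hP : P ω = ∅ := by
      by_contra h
      exact h0 ⟨h, Set.subset_univ _⟩
    have key : ∀ F : Set Ω, ω ∈ nKp P F := by
      intro F hF
      exact hF.1 hP
    apply Set.mem_iInter.2
    intro i
    rw [Function.iterate_succ_apply']
    exact key _
  · intro ω hω
    have h0 := Set.mem_iInter.1 hω 0
    have h1 := Set.mem_iInter.1 hω 1
    simp only [Function.iterate_succ, Function.iterate_zero, Function.comp_apply, id_eq] at h0 h1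
    exact ⟨h0, h1⟩
end

section
/- Let Ω be a set of states and P : Ω → 2^Ω a possibility correspondence. AU introspection holds for the core unawareness set: U'(Ω) ⊆ U'(U'(Ω)); if the agent is unaware (of the full state space), she is unaware of her unawareness. -/
lemma Kp_mono {Ω : Type*} (P : Ω → Set Ω) {E F : Set Ω} (h : E ⊆ F) :
    Kp P E ⊆ Kp P F := fun ω hω => ⟨hω.1, hω.2.trans h⟩

lemma nKp_anti {Ω : Type*} (P : Ω → Set Ω) {E F : Set Ω} (h : E ⊆ F) :
    nKp P F ⊆ nKp P E := Set.compl_subset_compl.mpr (Kp_mono P h)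

lemma nKp_empty {Ω : Type*} (P : Ω → Set Ω) : nKp P ∅ = Set.univ := by
  ext ω
  simp only [nKp, Kp, Set.mem_compl_iff, Set.mem_setOf_eq, Set.mem_univ, iff_true]
  rintro ⟨h1, h2⟩
  exact h1 (Set.subset_empty_iff.mp h2)

lemma nKp_iter_parity {Ω : Type*} (P : Ω → Set Ω) (n : ℕ) {E F : Set Ω} (h : E ⊆ F) :
    (nKp P)^[2 * n] E ⊆ (nKp P)^[2 * n] F ∧
    (nKp P)^[2 * n + 1] F ⊆ (nKp P)^[2 * n + 1] E := by
  induction n generalizing E F with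
  | zero => exact ⟨h, nKp_anti P h⟩
  | succ n ih =>
    have hEF : nKp P F ⊆ nKp P E := nKp_anti P h
    have hEF2 : nKp P (nKp P E) ⊆ nKp P (nKp P F) := nKp_anti P hEF
    have h1 : 2 * (n + 1) = (2 * n + 1) + 1 := by ring
    have h2 : 2 * (n + 1) + 1 = (2 * n + 1) + 1 + 1 := by ring
    constructor
    · rw [h1]
      calc (nKp P)^[(2 * n + 1) + 1] E = (nKp P)^[2 * n + 1] (nKp P E) :=
            Function.iterate_succ_apply _ _ _
        _ ⊆ (nKp P)^[2 * n + 1] (nKp P F) := (ih hEF).2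
        _ = (nKp P)^[(2 * n + 1) + 1] F := (Function.iterate_succ_apply _ _ _).symm
    · rw [h2]
      calc (nKp P)^[(2 * n + 1) + 1 + 1] F
            = (nKp P)^[2 * n + 1] (nKp P (nKp P F)) := by
            rw [Function.iterate_succ_apply (nKp P) (2 * n + 1 + 1) F,
              Function.iterate_succ_apply (nKp P) (2 * n + 1) (nKp P F)]
        _ ⊆ (nKp P)^[2 * n + 1] (nKp P (nKp P E)) := (ih hEF2).2
        _ = (nKp P)^[(2 * n + 1) + 1 + 1] E := by
            rw [Function.iterate_succ_apply (nKp P) (2 * n + 1 + 1) E,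
              Function.iterate_succ_apply (nKp P) (2 * n + 1) (nKp P E)]

/-- AU introspection for the core unawareness set: U'(Ω) ⊆ U'(U'(Ω)). -/
theorem Up_AU_introspection {Ω : Type*} [Nonempty Ω] (P : Ω → Set Ω) :
    Up P Set.univ ⊆ Up P (Up P Set.univ) := by
  intro ω hω
  have hmem : ∀ j : ℕ, ω ∈ (nKp P)^[j + 1] Set.univ := by
    intro j
    exact Set.mem_iInter.mp hω j
  rw [Up, Set.mem_iInter]
  intro i
  rcases Nat.even_or_odd (i + 1) with ⟨k, hk⟩ | ⟨k, hk⟩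
  · -- i + 1 = 2k, even; k ≥ 1
    have hk2 : i + 1 = 2 * k := by omega
    have hk1 : 1 ≤ k := by omega
    have hmono := (nKp_iter_parity P k (Set.empty_subset (Up P Set.univ))).1
    rw [← hk2] at hmono
    apply hmono
    rw [Function.iterate_succ_apply, nKp_empty P]
    obtain ⟨j, hj⟩ : ∃ j, i = j + 1 := ⟨i - 1, by omega⟩
    rw [hj]
    exact hmem j
  · -- i + 1 = 2k + 1, odd
    have hanti := (nKp_iter_parity P k (Set.subset_univ (Up P Set.univ))).2
    rw [← hk] at hanti
    exact hanti (hmem i)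
end

section
/- Let Ω be a set of states and P : Ω → 2^Ω a possibility correspondence. Symmetry holds: U'(Ω) = U'(∅); the agent's unawareness of the full state space coincides with her unawareness of the empty event. -/
/-- Symmetry: U'(Ω) = U'(∅). -/
theorem Up_symmetry {Ω : Type*} [Nonempty Ω] (P : Ω → Set Ω) :
    Up P Set.univ = Up P (∅ : Set Ω) := by
  have h0 : nKp P (∅ : Set Ω) = Set.univ := by
    ext ω
    simp [nKp, Kp, Set.subset_empty_iff]
  have h : ∀ i, (nKp P)^[i + 1] (∅ : Set Ω) = (nKp P)^[i] Set.univ := by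
    intro i
    rw [Function.iterate_succ_apply, h0]
  ext ω
  simp only [Up, Set.mem_iInter, h]
  constructor
  · intro H i
    cases i with
    | zero => simp
    | succ j => exact H j
  · intro H i
    exact H (i + 1)
end

section
/- Dekel–Lipman–Rustichini impossibility result: let Ω be a set of states and let K, U : 2^Ω → 2^Ω be operators satisfying (i) Necessitation: K(Ω) = Ω; (ii) KU introspection: K(U(E)) = ∅ for all E ⊆ Ω; (iii) AU introspection: U(E) ⊆ U(U(E)) for all E ⊆ Ω; and (iv) Plausibility: U(E) ⊆ Ω \ K(Ω \ K(E)) for all E ⊆ Ω. Then U(E) = ∅ for every event E ⊆ Ω; i.e., there is no non-trivial unawareness. -/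
/-- Dekel–Lipman–Rustichini impossibility result: any operators K, U on events
satisfying Necessitation, KU introspection, AU introspection and Plausibility
admit no non-trivial unawareness. -/
theorem dlr_impossibility {Ω : Type*} [Nonempty Ω] (K U : Set Ω → Set Ω)
    (hnec : K Set.univ = Set.univ)
    (hKU : ∀ E : Set Ω, K (U E) = ∅)
    (hAU : ∀ E : Set Ω, U E ⊆ U (U E))
    (hplaus : ∀ E : Set Ω, U E ⊆ Set.univ \ K (Set.univ \ K E)) :
    ∀ E : Set Ω, U E = ∅ := by
  intro E
  have h := (hAU E).trans (hplaus (U E))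
  rw [hKU, Set.diff_empty, hnec, Set.diff_self] at h
  exact Set.subset_empty_iff.mp h
end

section
/- Let Ω be a set of states and P : Ω → 2^Ω a partitional possibility correspondence, i.e., ω ∈ P(ω) for every ω ∈ Ω, and for all ω, ω' ∈ Ω, if ω' ∈ P(ω) then P(ω') = P(ω). Then the standard unawareness operator is trivial: U(E) = ∅ for every event E ⊆ Ω, where U(E) := ⋂_{i≥1} (¬K)^i(E), K(E) := {ω ∈ Ω : P(ω) ⊆ E} and ¬K(E) := Ω \ K(E). -/
/-- Standard knowledge operator: `K(E) = {ω : P ω ⊆ E}`. -/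
def Ks {Ω : Type*} (P : Ω → Set Ω) (E : Set Ω) : Set Ω :=
  {ω | P ω ⊆ E}

/-- Complement of the standard knowledge operator: `¬K(E) = Ω \ K(E)`. -/
def nKs {Ω : Type*} (P : Ω → Set Ω) (E : Set Ω) : Set Ω :=
  (Ks P E)ᶜ

/-- Standard unawareness operator: `U(E) = ⋂_{i ≥ 1} (¬K)^i (E)`. -/
def Us {Ω : Type*} (P : Ω → Set Ω) (E : Set Ω) : Set Ω :=
  ⋂ i : ℕ, (nKs P)^[i + 1] E

/-- A partitional possibility correspondence yields no unawareness at all. -/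
theorem Us_eq_empty_of_partitional {Ω : Type*} [Nonempty Ω] (P : Ω → Set Ω)
    (hrefl : ∀ ω : Ω, ω ∈ P ω)
    (hpart : ∀ ω ω' : Ω, ω' ∈ P ω → P ω' = P ω) :
    ∀ E : Set Ω, Us P E = ∅ := by
  intro E
  ext ω
  simp only [Set.mem_empty_iff_false, iff_false, Us, Set.mem_iInter]
  intro h
  have h1 := h 0
  have h2 := h 1
  have h2' : ω ∈ nKs P (nKs P E) := by
    simpa [Function.iterate_succ, Function.iterate_one] using h2
  -- negative introspection: ω ∈ nKs P E ⊆ Ks P (nKs P E)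
  apply h2'
  intro ω' hω'
  have hPeq := hpart ω ω' hω'
  intro hsub
  exact h1 (show P ω ⊆ E from hPeq ▸ hsub)
end
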